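/- arXiv:2304.10230 — 2 statements merged into one kernel-verified Lean document; each statement's English description precedes it below -/
import Mathlib

section
/- If w is a nontrivial element of a free group and w = v^s for some nonzero integer s, then v is a power of root(w), i.e., v = root(w)^k for some nonzero integer k. -/
/-!
Write `x.toWord = C ++ T ++ C⁻¹` with `T` cyclically reduced; then the reduced word of `x ^ n`
is `C ++ T ^ n ++ C⁻¹`. Hence `u ^ e = v ^ m` forces `u` and `v` to have the same conjugator `C`
and `T_u ^ e = T_v ^ m` as words. By the Fine–Wilf periodicity lemma this word has period
`gcd |T_u| |T_v|`, so `T_u` and `T_v` are powers of one word `Z`, and `u`, `v` are powers of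
`C Z C⁻¹`. Since the root `u` of `w` has maximal exponent, `u = C Z C⁻¹`, so `v` is a power of `u`.
-/

/-- In a group, `u` is the root and `e` the exponent of `w`:
`w = u ^ e` with `e ≥ 1` maximal among all ways of writing `w` as a power. -/
def IsRootExp {G : Type} [Group G] (w u : G) (e : ℕ) : Prop :=
  1 ≤ e ∧ w = u ^ e ∧ ∀ (v : G) (r : ℕ), w = v ^ r → r ≤ e

theorem Nat.add_sub_gcd_le_of_mul_eq_mul {a b e m : ℕ} (he : e ≠ 0) (hm : m ≠ 0)
    (h : e * a = m * b) : a + b - a.gcd b ≤ e * a := by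
  rcases Nat.lt_or_ge e 2 with he1 | he2
  · obtain rfl : e = 1 := by omega
    have : a.gcd b = b := Nat.gcd_eq_right ⟨m, by linarith⟩
    omega
  rcases Nat.lt_or_ge m 2 with hm1 | hm2
  · obtain rfl : m = 1 := by omega
    have : a.gcd b = a := Nat.gcd_eq_left ⟨e, by linarith⟩
    omega
  have := Nat.mul_le_mul_right a he2
  have := Nat.mul_le_mul_right b hm2
  omega

namespace List

variable {α : Type*}

theorem prefix_flatten_replicate (w : List α) {n : ℕ} (hn : n ≠ 0) :
    w <+: (replicate n w).flatten := by
  obtain ⟨k, rfl⟩ := Nat.exists_eq_succ_of_ne_zero hn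
  rw [replicate_succ, flatten_cons]
  exact prefix_append _ _

theorem hasPeriod_flatten_replicate (w : List α) (n : ℕ) :
    HasPeriod (replicate n w).flatten w.length := by
  cases n with
  | zero => simp
  | succ n =>
    rw [HasPeriod, replicate_succ, flatten_cons, take_left, prefix_append_right_inj,
      ← flatten_cons, ← replicate_succ, replicate_succ', flatten_concat]
    exact prefix_append _ _

theorem HasPeriod.eq_of_take_eq {v w : List α} {p : ℕ} (hp : 0 < p) (hv : HasPeriod v p)
    (hw : HasPeriod w p) (hlen : v.length = w.length) (htake : v.take p = w.take p) : v = w := by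
  rw [hasPeriod_iff_forall_getElem?_mod] at hv hw
  refine ext_getElem? fun i => ?_
  rcases lt_or_ge i v.length with hi | hi
  · have hmod : i % p < p := Nat.mod_lt i hp
    rw [hv i hi, hw i (hlen ▸ hi), ← getElem?_take_of_lt hmod, htake, getElem?_take_of_lt hmod]
  · rw [getElem?_eq_none hi, getElem?_eq_none (hlen ▸ hi)]

theorem HasPeriod.eq_flatten_replicate_take {w : List α} {p : ℕ} (hp : 0 < p)
    (per : HasPeriod w p) (hdvd : p ∣ w.length) :
    w = (replicate (w.length / p) (w.take p)).flatten := by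
  obtain ⟨k, hk⟩ := hdvd
  rcases k with _ | k
  · simp_all
  have htake : (w.take p).length = p :=
    length_take_of_le (by rw [hk]; exact Nat.le_mul_of_pos_right p k.succ_pos)
  have per' := hasPeriod_flatten_replicate (w.take p) (w.length / p)
  rw [htake] at per'
  refine per.eq_of_take_eq hp per' ?_ ?_
  · simp [htake, hk, Nat.mul_div_cancel_left _ hp, Nat.mul_comm]
  · rw [hk, Nat.mul_div_cancel_left _ hp, replicate_succ, flatten_cons, take_left' htake]

theorem exists_eq_flatten_replicate_of_flatten_replicate_eq {A B : List α} {e m : ℕ}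
    (he : e ≠ 0) (hm : m ≠ 0) (h : (replicate e A).flatten = (replicate m B).flatten) :
    ∃ Z : List α, ∃ a b : ℕ, A = (replicate a Z).flatten ∧ B = (replicate b Z).flatten := by
  rcases eq_or_ne A [] with rfl | hA
  · have : B = [] := by simpa [hm] using congrArg length h
    exact ⟨[], 0, 0, by simp, by simp [this]⟩
  obtain ⟨W, hWA, hWB⟩ : ∃ W, W = (replicate e A).flatten ∧ W = (replicate m B).flatten :=
    ⟨_, rfl, h⟩
  set g := A.length.gcd B.length
  have hg : 0 < g := Nat.gcd_pos_of_pos_left _ (length_pos_iff.2 hA)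
  have perW : HasPeriod W g := by
    have hlen : e * A.length = m * B.length := by simpa using congrArg length h
    refine HasPeriod.gcd ?_ ?_ ?_
    · rw [hWA]; exact hasPeriod_flatten_replicate A e
    · rw [hWB]; exact hasPeriod_flatten_replicate B m
    · simpa [hWA] using Nat.add_sub_gcd_le_of_mul_eq_mul he hm hlen
  have eq_pow_of_prefix : ∀ X, X <+: W → g ∣ X.length →
      X = (replicate (X.length / g) (W.take g)).flatten := by
    intro X hX hdvd
    rcases Nat.eq_zero_or_pos X.length with h0 | hpos
    · simp_all
    conv_lhs => rw [(perW.infix hX.isInfix).eq_flatten_replicate_take hg hdvd]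
    congr 2
    rw [prefix_iff_eq_take.1 hX, take_take, min_eq_left (Nat.le_of_dvd hpos hdvd)]
  exact ⟨W.take g, _, _,
    eq_pow_of_prefix A (hWA ▸ prefix_flatten_replicate A he) (Nat.gcd_dvd_left _ _),
    eq_pow_of_prefix B (hWB ▸ prefix_flatten_replicate B hm) (Nat.gcd_dvd_right _ _)⟩

end List

namespace FreeGroup

open List reduceCyclically

variable {α : Type*}

theorem toWord_pow_of_ne_zero [DecidableEq α] (x : FreeGroup α) {n : ℕ} (hn : n ≠ 0) :
    (x ^ n).toWord = conjugator x.toWord ++ (replicate n (reduceCyclically x.toWord)).flatten ++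
      invRev (conjugator x.toWord) := by
  rw [toWord_pow, reduce_flatten_replicate isReduced_toWord, if_neg hn]

theorem eq_conjugator_mul_reduceCyclically_mul_inv [DecidableEq α] (x : FreeGroup α) :
    x = mk (conjugator x.toWord) * mk (reduceCyclically x.toWord) *
      (mk (conjugator x.toWord))⁻¹ := by
  rw [inv_mk, mul_mk, mul_mk, conj_conjugator_reduceCyclically, mk_toWord]

/-- Comparing the words of `u ^ e = v ^ m` and of `u ^ (2 * e) = v ^ (2 * m)` shows that the
conjugators have the same length, hence agree. -/
theorem conjugator_eq_and_flatten_replicate_eq_of_pow_eq_pow [DecidableEq α] {u v : FreeGroup α}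
    {e m : ℕ} (he : e ≠ 0) (hm : m ≠ 0) (h : u ^ e = v ^ m) :
    conjugator u.toWord = conjugator v.toWord ∧
      (replicate e (reduceCyclically u.toWord)).flatten =
        (replicate m (reduceCyclically v.toWord)).flatten := by
  have h₁ := congrArg toWord h
  have h₂ := congrArg toWord (show u ^ (2 * e) = v ^ (2 * m) by rw [mul_comm, pow_mul, h,
    ← pow_mul, mul_comm])
  rw [toWord_pow_of_ne_zero u he, toWord_pow_of_ne_zero v hm] at h₁
  rw [toWord_pow_of_ne_zero u (by omega), toWord_pow_of_ne_zero v (by omega)] at h₂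
  have l₁ := congrArg length h₁
  have l₂ := congrArg length h₂
  simp only [length_append, length_flatten, map_replicate, sum_replicate, smul_eq_mul,
    invRev_length] at l₁ l₂
  have hT : e * (reduceCyclically u.toWord).length = m * (reduceCyclically v.toWord).length := by
    rw [mul_assoc, mul_assoc] at l₂; omega
  obtain ⟨hC, h₁'⟩ := append_inj (by simpa only [append_assoc] using h₁) (by omega)
  refine ⟨hC, (append_inj h₁' ?_).1⟩
  simpa only [length_flatten, map_replicate, sum_replicate, smul_eq_mul] using hT

theorem exists_eq_pow_and_eq_pow_of_pow_eq_pow {u v : FreeGroup α} {e m : ℕ} (he : e ≠ 0)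
    (hm : m ≠ 0) (h : u ^ e = v ^ m) : ∃ z : FreeGroup α, ∃ a b : ℕ, u = z ^ a ∧ v = z ^ b := by
  classical
  obtain ⟨hC, hT⟩ := conjugator_eq_and_flatten_replicate_eq_of_pow_eq_pow he hm h
  obtain ⟨Z, a, b, ha, hb⟩ := exists_eq_flatten_replicate_of_flatten_replicate_eq he hm hT
  refine ⟨mk (conjugator u.toWord) * mk Z * (mk (conjugator u.toWord))⁻¹, a, b, ?_, ?_⟩
  · rw [conj_pow, pow_mk, ← ha]
    exact eq_conjugator_mul_reduceCyclically_mul_inv u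
  · rw [conj_pow, pow_mk, ← hb, hC]
    exact eq_conjugator_mul_reduceCyclically_mul_inv v

theorem exists_eq_pow_and_eq_zpow_of_pow_eq_zpow {u v : FreeGroup α} {e : ℕ} {s : ℤ}
    (he : e ≠ 0) (hs : s ≠ 0) (h : u ^ e = v ^ s) :
    ∃ z : FreeGroup α, ∃ (a : ℕ) (b : ℤ), u = z ^ a ∧ v = z ^ b := by
  rcases Int.natAbs_eq s with hs' | hs'
  · rw [hs', zpow_natCast] at h
    obtain ⟨z, a, b, hu, hv⟩ := exists_eq_pow_and_eq_pow_of_pow_eq_pow he (by omega) h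
    exact ⟨z, a, b, hu, by rw [hv, zpow_natCast]⟩
  · rw [hs', zpow_neg, zpow_natCast, ← inv_pow] at h
    obtain ⟨z, a, b, hu, hv⟩ := exists_eq_pow_and_eq_pow_of_pow_eq_pow he (by omega) h
    exact ⟨z, a, -b, hu, by rw [zpow_neg, zpow_natCast, ← hv, inv_inv]⟩

end FreeGroup

theorem power_root (α : Type) (w u v : FreeGroup α) (e : ℕ) (s : ℤ)
    (hw : w ≠ 1) (h : IsRootExp w u e) (hs : s ≠ 0) (hv : w = v ^ s) :
    ∃ k : ℤ, k ≠ 0 ∧ v = u ^ k := by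
  obtain ⟨he, rfl, hmax⟩ := h
  obtain ⟨z, a, k, rfl, rfl⟩ :=
    FreeGroup.exists_eq_pow_and_eq_zpow_of_pow_eq_zpow (by omega) hs hv
  have ha : 0 < a := Nat.pos_of_ne_zero (by rintro rfl; simp at hw)
  have hae : a * e ≤ e := hmax z (a * e) (pow_mul z a e).symm
  obtain rfl : a = 1 := by nlinarith
  refine ⟨k, ?_, by rw [pow_one]⟩
  rintro rfl
  exact hw (hv.trans (by simp))
end

section
/- Let P be a nonempty set of primes, F a free group, w ∈ F nontrivial with root u and exponent e. Then the pro-G_P closure of ⟨w⟩ in F is ⟨u^{ν_P(e)}⟩, where ν_P(e) is the largest divisor of e that is a product of primes in P. -/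
/-- The closure of the subgroup `H` in the pro-`G_P` topology on `G`, where `G_P`
is the class of finite groups whose order is a product of primes in `P`. -/
def GPClosure (P : Set ℕ) {G : Type} [Group G] (H : Subgroup G) : Set G :=
  { x | ∀ (K : Type) [Group K] [Finite K] (φ : G →* K),
      (∀ q : ℕ, q.Prime → q ∣ Nat.card K → q ∈ P) → φ x ∈ H.map φ }

namespace FreeGroup

variable {α : Type*}

def IsSyllables (s : List (α × ℤ)) : Prop :=
  (∀ x ∈ s, x.2 ≠ 0) ∧ s.IsChain (fun x y => x.1 ≠ y.1)

def syllableProd (s : List (α × ℤ)) : FreeGroup α :=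
  (s.map fun x => of x.1 ^ x.2).prod

lemma exists_isSyllables_zpow_mul [DecidableEq α] (a : α) (n : ℤ) {s : List (α × ℤ)}
    (hs : IsSyllables s) :
    ∃ s', IsSyllables s' ∧ syllableProd s' = of a ^ n * syllableProd s := by
  obtain ⟨hs0, hsc⟩ := hs
  by_cases hhead : ∃ e t, s = (a, e) :: t
  · obtain ⟨e, t, rfl⟩ := hhead
    have hprod : of a ^ n * syllableProd ((a, e) :: t) = of a ^ (n + e) * syllableProd t := by
      simp [syllableProd, zpow_add, mul_assoc]
    rw [hprod]
    by_cases hne : n + e = 0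
    · exact ⟨t, ⟨fun x hx => hs0 x (List.mem_cons_of_mem _ hx), hsc.tail⟩, by simp [hne]⟩
    · refine ⟨(a, n + e) :: t, ⟨?_, hsc.imp_head (x := (a, e)) (y := (a, n + e)) id⟩,
        by simp [syllableProd]⟩
      rintro x (_ | ⟨_, hx⟩)
      exacts [hne, hs0 x (List.mem_cons_of_mem _ hx)]
  · by_cases hn : n = 0
    · exact ⟨s, ⟨hs0, hsc⟩, by simp [hn]⟩
    refine ⟨(a, n) :: s, ⟨?_, List.isChain_cons.mpr ⟨?_, hsc⟩⟩, by simp [syllableProd]⟩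
    · rintro x (_ | ⟨_, hx⟩)
      exacts [hn, hs0 x hx]
    · rintro ⟨b, e⟩ hy rfl
      exact hhead ⟨e, s.tail, List.eq_cons_of_mem_head? hy⟩

theorem exists_isSyllables (g : FreeGroup α) : ∃ s, IsSyllables s ∧ syllableProd s = g := by
  classical
  suffices h : ∀ s, IsSyllables s → ∃ s', IsSyllables s' ∧ syllableProd s' = g * syllableProd s by
    simpa [syllableProd] using h [] ⟨by simp, .nil⟩
  induction g with
  | C1 => exact fun s hs => ⟨s, hs, (one_mul _).symm⟩
  | of a => simpa using fun s hs => exists_isSyllables_zpow_mul a 1 hs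
  | inv_of a _ => simpa using fun s hs => exists_isSyllables_zpow_mul a (-1) hs
  | mul x y ihx ihy =>
    intro s hs
    obtain ⟨s₁, hs₁, h₁⟩ := ihy s hs
    obtain ⟨s₂, hs₂, h₂⟩ := ihx s₁ hs₁
    exact ⟨s₂, hs₂, by rw [h₂, h₁, mul_assoc]⟩

end FreeGroup

namespace Matrix

section Unitriangular

variable {n R : Type*} [Fintype n] [LinearOrder n] [CommRing R]

variable (n R) in
def strictUpper : AddSubgroup (Matrix n n R) where
  carrier := {B | ∀ i j, j ≤ i → B i j = 0}
  zero_mem' _ _ _ := rfl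
  add_mem' hA hB i j h := by simp [hA i j h, hB i j h]
  neg_mem' hA i j h := by simp [hA i j h]

lemma mul_mem_strictUpper {A B : Matrix n n R} (hA : A ∈ strictUpper n R)
    (hB : B ∈ strictUpper n R) : A * B ∈ strictUpper n R := by
  intro i j hji
  refine Finset.sum_eq_zero fun k _ => ?_
  rcases le_or_gt k i with hki | hik
  · simp [hA i k hki]
  · simp [hB k j (hji.trans hik.le)]

variable [DecidableEq n]

lemma isUnit_one_add_of_mem_strictUpper {B : Matrix n n R} (hB : B ∈ strictUpper n R) :
    IsUnit (1 + B) := by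
  rw [isUnit_iff_isUnit_det, det_of_isUpperTriangular]
  · simp [hB _ _ le_rfl]
  · intro i j (hji : j < i)
    rw [add_apply, one_apply_ne hji.ne', hB i j hji.le, add_zero]

variable (n R) in
def unitriangular : Submonoid (Matrix n n R) where
  carrier := {A | A - 1 ∈ strictUpper n R}
  one_mem' := by simp [zero_mem]
  mul_mem' {A B} (hA : A - 1 ∈ strictUpper n R) (hB : B - 1 ∈ strictUpper n R) := by
    show A * B - 1 ∈ strictUpper n R
    rw [show A * B - 1 = (A - 1) * (B - 1) + (A - 1) + (B - 1) by noncomm_ring]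
    exact add_mem (add_mem (mul_mem_strictUpper hA hB) hA) hB

variable [Finite R]

variable (n R) in
def unitriangularGroup : Subgroup (Matrix n n R)ˣ where
  toSubmonoid := (unitriangular n R).comap (Units.coeHom _)
  inv_mem' {A} hA := by
    obtain ⟨k, hk⟩ := (isOfFinOrder_of_finite A).mem_powers_iff_mem_zpowers.mpr
      (inv_mem (Subgroup.mem_zpowers A))
    rw [← hk]
    exact pow_mem (S := (unitriangular n R).comap (Units.coeHom _)) hA k

lemma mem_unitriangularGroup {A : (Matrix n n R)ˣ} :
    A ∈ unitriangularGroup n R ↔ (A : Matrix n n R) - 1 ∈ strictUpper n R := Iff.rfl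

noncomputable def unitriangularGroupEquivStrictUpper : unitriangularGroup n R ≃ strictUpper n R where
  toFun A := ⟨A.1 - 1, A.2⟩
  invFun B := ⟨(isUnit_one_add_of_mem_strictUpper B.2).unit, by
    simp [mem_unitriangularGroup]⟩
  left_inv A := by ext : 2; simp
  right_inv B := by ext : 1; simp

theorem isPGroup_unitriangularGroup {p m : ℕ} [NeZero (p ^ m)] :
    IsPGroup p (unitriangularGroup n (ZMod (p ^ m))) := by
  refine IsPGroup.of_card_dvd_pow (n := m * Fintype.card n * Fintype.card n) ?_
  rw [Nat.card_congr unitriangularGroupEquivStrictUpper]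
  refine (AddSubgroup.card_addSubgroup_dvd_card _).trans ?_
  simp [Matrix, ZMod.card, ← pow_mul, mul_assoc]

end Unitriangular

section Superdiagonal

variable {R : Type*} [CommSemiring R] {n : ℕ}

theorem ofFn_prod_apply_zero_of_lt {t : ℕ} (X : Fin t → Matrix (Fin (n + 1)) (Fin (n + 1)) R)
    (hX : ∀ i (x y : Fin (n + 1)), (x : ℕ) + 1 < y → X i x y = 0) (y : Fin (n + 1)) (hy : t < y) :
    (List.ofFn X).prod 0 y = 0 := by
  induction t generalizing y with
  | zero => exact one_apply_ne (Fin.ne_of_lt (Fin.lt_def.mpr hy))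
  | succ t ih =>
    rw [List.ofFn_succ', List.concat_eq_append, List.prod_append, List.prod_singleton, mul_apply]
    refine Finset.sum_eq_zero fun z _ => ?_
    rcases lt_or_ge t z with hz | hz
    · rw [ih _ (fun i => hX _) z hz, zero_mul]
    · rw [hX _ z y (by omega), mul_zero]

theorem ofFn_prod_apply_zero_self {t : ℕ} (ht : t ≤ n)
    (X : Fin t → Matrix (Fin (n + 1)) (Fin (n + 1)) R)
    (hX : ∀ i (x y : Fin (n + 1)), (x : ℕ) + 1 < y → X i x y = 0) :
    (List.ofFn X).prod 0 ⟨t, by omega⟩ = ∏ i : Fin t, X i ⟨i, by omega⟩ ⟨i + 1, by omega⟩ := by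
  induction t with
  | zero => simp
  | succ t ih =>
    rw [List.ofFn_succ', List.concat_eq_append, List.prod_append, List.prod_singleton, mul_apply,
      Finset.sum_eq_single ⟨t, by omega⟩, ih (by omega) _ (fun i => hX _), Fin.prod_univ_castSucc]
    · rfl
    · intro z _ hz
      rcases lt_or_gt_of_ne (Fin.val_ne_of_ne hz) with hzt | hzt
      · rw [hX _ z _ (Nat.succ_lt_succ hzt), mul_zero]
      · rw [ofFn_prod_apply_zero_of_lt _ (fun i => hX _) z hzt, zero_mul]
    · simp

end Superdiagonal

end Matrix

lemma one_add_zsmul_mul_one_add_zsmul {A : Type*} [Ring A] {N : A} (hN : N * N = 0) (a b : ℤ) :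
    (1 + a • N) * (1 + b • N) = 1 + (a + b) • N := by
  simp only [add_mul, mul_add, one_mul, mul_one, smul_mul_smul_comm, hN, smul_zero, add_smul]
  abel

namespace FreeGroup

section LetterMatrix

variable {α : Type*} [DecidableEq α] (R : Type*) [CommRing R] (s : List (α × ℤ))

def letterMatrix (a : α) : Matrix (Fin (s.length + 1)) (Fin (s.length + 1)) R :=
  Matrix.of fun i j => if (j : ℕ) = i + 1 ∧ s[(i : ℕ)]?.map Prod.fst = some a then 1 else 0

variable {R s}

lemma letterMatrix_apply_of_ne {a : α} {i j : Fin (s.length + 1)} (h : (j : ℕ) ≠ i + 1) :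
    letterMatrix R s a i j = 0 := by
  simp [letterMatrix, h]

lemma letterMatrix_mem_strictUpper (a : α) : letterMatrix R s a ∈ Matrix.strictUpper _ R :=
  fun i j hji => letterMatrix_apply_of_ne (by rw [Fin.le_def] at hji; omega)

lemma letterMatrix_mul_self (hs : s.IsChain (fun x y => x.1 ≠ y.1)) (a : α) :
    letterMatrix R s a * letterMatrix R s a = 0 := by
  ext i j
  rw [Matrix.mul_apply, Matrix.zero_apply]
  refine Finset.sum_eq_zero fun k _ => ?_
  simp only [letterMatrix, Matrix.of_apply, mul_ite, mul_one, mul_zero]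
  split_ifs with hkj hik <;> try rfl
  obtain ⟨-, hk⟩ := hkj
  obtain ⟨hki, hi⟩ := hik
  rw [hki] at hk
  obtain ⟨x, hx, rfl⟩ := Option.map_eq_some_iff.mp hk
  obtain ⟨hlt, rfl⟩ := List.getElem?_eq_some_iff.mp hx
  rw [List.getElem?_eq_getElem (by omega), Option.map_some, Option.some.injEq] at hi
  exact absurd hi (List.isChain_iff_getElem.mp hs i hlt)

end LetterMatrix

section LetterUnit

variable {α : Type*} [DecidableEq α] (R : Type*) [CommRing R] [Finite R] {s : List (α × ℤ)}
  (hs : s.IsChain (fun x y => x.1 ≠ y.1))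

def letterUnit (a : α) : Matrix.unitriangularGroup (Fin (s.length + 1)) R :=
  ⟨⟨1 + letterMatrix R s a, 1 - letterMatrix R s a,
    by simp [mul_sub, add_mul, letterMatrix_mul_self hs],
    by simp [sub_mul, mul_add, letterMatrix_mul_self hs]⟩,
    by simpa [Matrix.mem_unitriangularGroup] using letterMatrix_mem_strictUpper a⟩

variable {R}

lemma coe_letterUnit_zpow (a : α) (k : ℤ) :
    ((letterUnit R hs a ^ k).val : Matrix (Fin (s.length + 1)) (Fin (s.length + 1)) R)
      = 1 + k • letterMatrix R s a := by
  have hN := letterMatrix_mul_self (R := R) hs a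
  induction k using Int.induction_on with
  | zero => simp
  | succ k ih =>
    rw [zpow_add_one, Subgroup.coe_mul, Units.val_mul, ih]
    simpa [letterUnit] using one_add_zsmul_mul_one_add_zsmul hN k 1
  | pred k ih =>
    rw [zpow_sub_one, Subgroup.coe_mul, Units.val_mul, ih]
    simpa [letterUnit, sub_eq_add_neg] using one_add_zsmul_mul_one_add_zsmul hN (-k) (-1)

lemma lift_letterUnit_syllableProd_apply :
    ((lift (letterUnit R hs) (syllableProd s)).val :
      Matrix (Fin (s.length + 1)) (Fin (s.length + 1)) R) 0 (Fin.last _)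
      = ((s.map Prod.snd).prod : R) := by
  let ψ := (Units.coeHom _).comp ((Matrix.unitriangularGroup _ R).subtype.comp
    (lift (letterUnit R hs)))
  have hψ (x : α × ℤ) : ψ (of x.1 ^ x.2) = 1 + x.2 • letterMatrix R s x.1 := by
    rw [← coe_letterUnit_zpow hs, ← lift_apply_of (f := letterUnit R hs), ← map_zpow]
    rfl
  have hcast : ((s.map Prod.snd).prod : R) = ∏ i : Fin s.length, (s[(i : ℕ)].2 : R) := by
    rw [← List.prod_ofFn, List.ofFn_getElem_eq_map s (fun x => (x.2 : R)), Int.cast_list_prod,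
      List.map_map]
    rfl
  change ψ (syllableProd s) 0 (Fin.last _) = _
  rw [syllableProd, map_list_prod, List.map_map, ← List.ofFn_getElem_eq_map, hcast]
  simp only [Function.comp_apply, hψ]
  refine (Matrix.ofFn_prod_apply_zero_self le_rfl _ fun i x y hxy => ?_).trans
    (Finset.prod_congr rfl fun i _ => ?_)
  · rw [Matrix.add_apply, Matrix.smul_apply, letterMatrix_apply_of_ne (by omega), smul_zero,
      add_zero, Matrix.one_apply_ne (by rw [ne_eq, Fin.ext_iff]; omega)]
  · rw [Matrix.add_apply, Matrix.smul_apply, Matrix.one_apply_ne (by simp [Fin.ext_iff]),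
      zero_add]
    simp [letterMatrix]

end LetterUnit

theorem exists_isPGroup_map_ne_one {α : Type*} {p : ℕ} (hp : p.Prime) {g : FreeGroup α}
    (hg : g ≠ 1) :
    ∃ (K : Type) (_ : Group K) (_ : Finite K) (φ : FreeGroup α →* K), IsPGroup p K ∧ φ g ≠ 1 := by
  classical
  obtain ⟨s, ⟨hs0, hsc⟩, rfl⟩ := exists_isSyllables g
  set E := (s.map Prod.snd).prod
  have hE : E ≠ 0 := List.prod_ne_zero fun h => by
    obtain ⟨x, hx, hx0⟩ := List.mem_map.mp h
    exact hs0 x hx hx0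
  -- the image of `g` has top-right entry `E`, which survives modulo `p ^ |E| > |E|`
  have : NeZero (p ^ E.natAbs) := ⟨pow_ne_zero _ hp.ne_zero⟩
  refine ⟨_, _, inferInstance, lift (letterUnit (ZMod (p ^ E.natAbs)) hsc),
    Matrix.isPGroup_unitriangularGroup, fun h => ?_⟩
  have hs : s ≠ [] := by
    rintro rfl
    exact hg rfl
  have hlast : (0 : Fin (s.length + 1)) ≠ Fin.last _ := by
    simpa [Fin.ext_iff, eq_comm] using hs
  have htop := lift_letterUnit_syllableProd_apply (R := ZMod (p ^ E.natAbs)) hsc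
  rw [h, OneMemClass.coe_one, Units.val_one, Matrix.one_apply_ne hlast, eq_comm,
    ZMod.intCast_zmod_eq_zero_iff_dvd] at htop
  have := Nat.le_of_dvd (Int.natAbs_pos.mpr hE) (by simpa using Int.natAbs_dvd_natAbs.mpr htop)
  exact this.not_gt (Nat.lt_pow_self hp.one_lt)

end FreeGroup

theorem Commute.of_pow_right {G : Type*} [Group G] [IsMulTorsionFree G] {a b : G} {n : ℕ}
    (hn : n ≠ 0) (h : Commute a (b ^ n)) : Commute a b := by
  have hconj : MulAut.conj a b = b := pow_left_injective hn <| by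
    dsimp only
    rw [← map_pow, MulAut.conj_apply, h.eq, mul_inv_cancel_right]
  exact mul_inv_eq_iff_eq_mul.mp hconj

theorem mem_zpowers_pow_of_coprime {G : Type*} [Group G] {g : G} {m : ℕ}
    (h : (orderOf g).Coprime m) : g ∈ Subgroup.zpowers (g ^ m) := by
  refine ⟨Nat.gcdB (orderOf g) m, ?_⟩
  have hbezout := Nat.gcd_eq_gcd_ab (orderOf g) m
  rw [h.gcd_eq_one, Nat.cast_one] at hbezout
  calc (g ^ m) ^ Nat.gcdB (orderOf g) m
      = g ^ ((orderOf g : ℤ) * Nat.gcdA (orderOf g) m + m * Nat.gcdB (orderOf g) m) := by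
        rw [zpow_add, zpow_mul, zpow_natCast, pow_orderOf_eq_one, one_zpow, one_mul, zpow_mul,
          zpow_natCast]
    _ = g := by rw [← hbezout, zpow_one]

theorem IsPGroup.pow_dvd_of_zpow_mem_zpowers {K : Type*} [Group K] {q : ℕ} [Fact q.Prime]
    (hK : IsPGroup q K) {g : K} {a e : ℕ} (hg : g ^ q ^ a ≠ 1) (he : q ^ a ∣ e) {k : ℤ}
    (hk : g ^ k ∈ Subgroup.zpowers (g ^ e)) : (q ^ a : ℤ) ∣ k := by
  obtain ⟨j, hj⟩ := IsPGroup.iff_orderOf.mp hK g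
  have hqo : q ^ a ∣ orderOf g := by
    rw [hj]
    refine pow_dvd_pow q (le_of_not_ge fun hja => hg ?_)
    rw [← orderOf_dvd_iff_pow_eq_one, hj]
    exact pow_dvd_pow q hja
  obtain ⟨t, ht : (g ^ e) ^ t = g ^ k⟩ := hk
  have hot : (orderOf g : ℤ) ∣ e * t - k := by
    rw [orderOf_dvd_iff_zpow_eq_one, zpow_sub, zpow_mul, zpow_natCast, ht, mul_inv_cancel]
  have het : (q ^ a : ℤ) ∣ e * t := Dvd.dvd.mul_right (by exact_mod_cast he) t
  exact (dvd_sub_right het).mp (Dvd.dvd.trans (by exact_mod_cast hqo) hot)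

theorem FreeGroup.subsingleton_of_isMulCommutative {α : Type*} [IsMulCommutative (FreeGroup α)] :
    Subsingleton α := by
  classical
  refine ⟨fun a b => by_contra fun hab => ?_⟩
  let f : α → Equiv.Perm (Fin 3) := fun x => if x = a then Equiv.swap 0 1 else Equiv.swap 1 2
  have h := congrArg (lift f) (isMulCommutative_iff.mp ‹_› (of a) (of b))
  rw [_root_.map_mul, _root_.map_mul, lift_apply_of, lift_apply_of] at h
  simp only [f, if_pos rfl, if_neg (Ne.symm hab)] at h
  exact absurd h (by decide)

theorem IsFreeGroup.isCyclic_of_isMulCommutative {G : Type*} [Group G] [IsFreeGroup G]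
    [IsMulCommutative G] : IsCyclic G := by
  let e := IsFreeGroup.toFreeGroup G
  have : IsMulCommutative (FreeGroup (IsFreeGroup.Generators G)) :=
    isMulCommutative_iff.mpr fun x y => e.symm.injective <| by
      rw [map_mul, map_mul]
      exact isMulCommutative_iff.mp ‹_› _ _
  have := FreeGroup.subsingleton_of_isMulCommutative (α := IsFreeGroup.Generators G)
  have : IsCyclic (FreeGroup (IsFreeGroup.Generators G)) := by
    rcases isEmpty_or_nonempty (IsFreeGroup.Generators G) with _ | ⟨⟨x⟩⟩
    · infer_instance
    · have := uniqueOfSubsingleton x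
      infer_instance
  exact isCyclic_of_surjective e.symm e.symm.surjective

theorem FreeGroup.exists_mem_zpowers_of_commute {α : Type*} {x y : FreeGroup α}
    (h : Commute x y) : ∃ z, x ∈ Subgroup.zpowers z ∧ y ∈ Subgroup.zpowers z := by
  let H := Subgroup.closure ({x, y} : Set (FreeGroup α))
  have : IsMulCommutative H := Subgroup.isMulCommutative_closure <| by
    rintro a (rfl | rfl) b (rfl | rfl)
    exacts [rfl, h.eq, h.symm.eq, rfl]
  have : IsCyclic H := IsFreeGroup.isCyclic_of_isMulCommutative
  obtain ⟨z, hz⟩ := IsCyclic.exists_generator (α := H)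
  have hmem (a : FreeGroup α) (ha : a ∈ H) : a ∈ Subgroup.zpowers (z : FreeGroup α) := by
    obtain ⟨k, hk⟩ := hz ⟨a, ha⟩
    exact ⟨k, congrArg Subtype.val hk⟩
  exact ⟨z, hmem x (Subgroup.subset_closure (by simp)),
    hmem y (Subgroup.subset_closure (by simp))⟩

theorem FreeGroup.mem_zpowers_of_commute_of_isRootExp {α : Type} {w u x : FreeGroup α} {e : ℕ}
    (hw : w ≠ 1) (hre : IsRootExp w u e) (hxw : Commute x w) : x ∈ Subgroup.zpowers u := by
  obtain ⟨he, rfl, hmax⟩ := hre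
  obtain ⟨z, hxz, j, hj : z ^ j = u⟩ := exists_mem_zpowers_of_commute (hxw.of_pow_right (by omega))
  obtain ⟨v, hv, hvz⟩ : ∃ v, z ^ j = v ^ j.natAbs ∧ Subgroup.zpowers v = Subgroup.zpowers z := by
    rcases Int.natAbs_eq j with hj | hj
    · exact ⟨z, by rw [← zpow_natCast, ← hj], rfl⟩
    · exact ⟨z⁻¹, by rw [inv_pow, ← zpow_natCast, ← zpow_neg, ← hj], Subgroup.zpowers_inv⟩
  have hj0 : j.natAbs ≠ 0 := fun h0 => hw <| by
    rw [← hj, Int.natAbs_eq_zero.mp h0, zpow_zero, one_pow]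
  have hj1 : j.natAbs = 1 := by
    have := hmax v (j.natAbs * e) (by rw [← hj, hv, pow_mul])
    nlinarith [Nat.pos_of_ne_zero hj0]
  rwa [← hj, hv, hj1, pow_one, hvz]

section GPClosure

variable {P : Set ℕ} {G : Type} [Group G]

theorem map_mem_zpowers_of_mem_GPClosure {w x : G} (hx : x ∈ GPClosure P (Subgroup.zpowers w))
    {p : ℕ} (hp : p ∈ P) [Fact p.Prime] {K : Type} [Group K] [Finite K] (hK : IsPGroup p K)
    (φ : G →* K) : φ x ∈ Subgroup.zpowers (φ w) := by
  rw [← MonoidHom.map_zpowers]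
  refine hx K φ fun q hq hqK => ?_
  obtain ⟨n, hn⟩ := IsPGroup.iff_card.mp hK
  rw [hn] at hqK
  rwa [(Nat.prime_dvd_prime_iff_eq hq Fact.out).mp (hq.dvd_of_dvd_pow hqK)]

theorem FreeGroup.commute_of_mem_GPClosure {α : Type} {w x : FreeGroup α}
    (hx : x ∈ GPClosure P (Subgroup.zpowers w)) {p : ℕ} (hp : p ∈ P) (hpp : p.Prime) :
    Commute x w := by
  have := Fact.mk hpp
  by_contra hxw
  obtain ⟨K, _, _, φ, hK, hφ⟩ :=
    exists_isPGroup_map_ne_one hpp (mt commutatorElement_eq_one_iff_commute.mp hxw)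
  obtain ⟨t, ht : φ w ^ t = φ x⟩ := map_mem_zpowers_of_mem_GPClosure hx hp hK φ
  rw [map_commutatorElement, ← ht] at hφ
  exact hφ (commutatorElement_eq_one_iff_commute.mpr ((Commute.refl _).zpow_left t))

theorem FreeGroup.pow_dvd_of_zpow_mem_GPClosure {α : Type} {u : FreeGroup α} (hu : u ≠ 1)
    {e : ℕ} {k : ℤ} (hk : u ^ k ∈ GPClosure P (Subgroup.zpowers (u ^ e))) {q a : ℕ} (hq : q ∈ P)
    (hqp : q.Prime) (he : q ^ a ∣ e) : (q ^ a : ℤ) ∣ k := by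
  have := Fact.mk hqp
  obtain ⟨K, _, _, φ, hK, hφ⟩ :=
    exists_isPGroup_map_ne_one hqp ((pow_eq_one_iff_left (pow_ne_zero a hqp.ne_zero)).not.mpr hu)
  have hk' := map_mem_zpowers_of_mem_GPClosure hk hq hK φ
  rw [map_zpow, map_pow] at hk'
  exact hK.pow_dvd_of_zpow_mem_zpowers (by rwa [← map_pow]) he hk'

theorem FreeGroup.natCast_dvd_of_zpow_mem_GPClosure {α : Type} {u : FreeGroup α} (hu : u ≠ 1)
    {e : ℕ} {k : ℤ} (hk : u ^ k ∈ GPClosure P (Subgroup.zpowers (u ^ e))) {d : ℕ} (hd0 : d ≠ 0)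
    (hde : d ∣ e) (hdP : ∀ q ∈ d.primeFactors, q ∈ P) : (d : ℤ) ∣ k := by
  rw [← Int.natAbs_dvd_natAbs, Int.natAbs_natCast, Nat.dvd_iff_prime_pow_dvd_dvd]
  intro q a hq hqa
  rcases Nat.eq_zero_or_pos a with rfl | ha
  · simp
  have hqP : q ∈ P := hdP q (Nat.mem_primeFactors.mpr ⟨hq, (dvd_pow_self q ha.ne').trans hqa, hd0⟩)
  simpa using Int.natAbs_dvd_natAbs.mpr
    (pow_dvd_of_zpow_mem_GPClosure hu hk hqP hq (hqa.trans hde))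

end GPClosure

theorem notMem_of_prime_dvd_div_of_isGreatest {P : Set ℕ} {e ν : ℕ}
    (hν : IsGreatest {d : ℕ | d ∣ e ∧ ∀ q ∈ d.primeFactors, q ∈ P} ν) {r : ℕ} (hr : r.Prime)
    (hre : r ∣ e / ν) : r ∉ P := by
  intro hrP
  have hν0 : ν ≠ 0 := Nat.one_le_iff_ne_zero.mp (hν.2 ⟨one_dvd e, by simp⟩)
  have hmem : ν * r ∈ {d : ℕ | d ∣ e ∧ ∀ q ∈ d.primeFactors, q ∈ P} := by
    refine ⟨Nat.mul_dvd_of_dvd_div hν.1.1 hre, fun q hq => ?_⟩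
    rw [Nat.primeFactors_mul hν0 hr.ne_zero, hr.primeFactors] at hq
    rcases Finset.mem_union.mp hq with hq | hq
    exacts [hν.1.2 q hq, Finset.mem_singleton.mp hq ▸ hrP]
  have := hν.2 hmem
  nlinarith [hr.two_le, Nat.pos_of_ne_zero hν0]

theorem zpow_mem_GPClosure_of_isGreatest {P : Set ℕ} {G : Type} [Group G] {w u : G} {e ν : ℕ}
    (hwu : w = u ^ e) (hν : IsGreatest {d : ℕ | d ∣ e ∧ ∀ q ∈ d.primeFactors, q ∈ P} ν) (t : ℤ) :
    (u ^ ν) ^ t ∈ GPClosure P (Subgroup.zpowers w) := by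
  intro K _ _ φ hK
  rw [MonoidHom.map_zpowers, map_zpow]
  refine zpow_mem ?_ t
  have hcop : (orderOf (φ u ^ ν)).Coprime (e / ν) := Nat.coprime_of_dvd fun r hr hro hre =>
    notMem_of_prime_dvd_div_of_isGreatest hν hr hre (hK r hr (hro.trans (orderOf_dvd_natCard _)))
  have := mem_zpowers_pow_of_coprime hcop
  rwa [← pow_mul, Nat.mul_div_cancel' hν.1.1, ← map_pow, ← map_pow, ← hwu] at this

theorem cyclic_GP_closure (P : Set ℕ) (hPne : P.Nonempty) (hPp : ∀ p ∈ P, p.Prime)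
    (α : Type) (w u : FreeGroup α) (e : ℕ) (hw : w ≠ 1) (hre : IsRootExp w u e)
    (ν : ℕ) (hν : IsGreatest {d : ℕ | d ∣ e ∧ ∀ q ∈ d.primeFactors, q ∈ P} ν) :
    GPClosure P (Subgroup.zpowers w) = (Subgroup.zpowers (u ^ ν) : Set (FreeGroup α)) := by
  have hu : u ≠ 1 := by
    rintro rfl
    exact hw (by rw [hre.2.1, one_pow])
  have hν0 : ν ≠ 0 := Nat.one_le_iff_ne_zero.mp (hν.2 ⟨one_dvd e, by simp⟩)
  ext x
  constructor
  · intro hx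
    obtain ⟨p, hp⟩ := hPne
    obtain ⟨k, rfl⟩ := Subgroup.mem_zpowers_iff.mp <| FreeGroup.mem_zpowers_of_commute_of_isRootExp
      hw hre (FreeGroup.commute_of_mem_GPClosure hx hp (hPp p hp))
    rw [hre.2.1] at hx
    obtain ⟨t, rfl⟩ := FreeGroup.natCast_dvd_of_zpow_mem_GPClosure hu hx hν0 hν.1.1 hν.1.2
    exact ⟨t, by simp [zpow_mul]⟩
  · rintro ⟨t, rfl⟩
    exact zpow_mem_GPClosure_of_isGreatest hre.2.1 hν t
end
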